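/- The unique minimizer τ(t) of F(τ; t, δ) over τ > 0 satisfies √(t/(δ - 1/2 + v)) ≤ τ(t) ≤ min{ √(t/(δ - 1/2)), √((4 + t)/δ) }, where v = ∫_{b}^∞ x² φ(x) dx with b = 2√((δ - 1/2)/t), and moreover v < 1/2. -/

import Mathlib

/-!
Write `F(τ) = τ (δ - 1/2) / 2 + t / (2τ) + ∫ tailLoss τ x φ(x) dx`, where
`tailLoss τ x = (τ/2) (x - 2/τ)₊²`. For fixed `x`, `τ ↦ tailLoss τ x` is convex with derivative
`(x² - 4/τ²)₊ / 2`, so for `τ₁ ≤ τ₂` the slope `(F(τ₂) - F(τ₁)) / ((τ₂ - τ₁)/2)` lies between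
`δ - 1/2 - t/(τ₁τ₂) + ∫_{2/τ₁}^∞ (x² - 4/τ₁²) φ` and `δ - 1/2 - t/(τ₁τ₂) + ∫_{2/τ₂}^∞ x² φ`.
At the minimiser, slopes to its left are `≤ 0` and slopes to its right `≥ 0`. Testing
`√(t/(δ - 1/2))`, `√((4 + t)/δ)` and `√(t/(δ - 1/2 + v))` against this gives the three bounds;
the only Gaussian input is `∫_0^∞ φ = ∫_0^∞ x² φ = 1/2`.
-/

open Real Set MeasureTheory

/-- standard normal density -/
noncomputable def stdPDF (x : ℝ) : ℝ := Real.exp (-x ^ 2 / 2) / Real.sqrt (2 * Real.pi)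

/-- The objective F(τ; t, δ). -/
noncomputable def Fobj (δ t τ : ℝ) : ℝ :=
  τ / 2 * (δ - 1 / 2) + t / (2 * τ)
    + τ / 2 * ∫ x in Set.Ioi (2 / τ), (x - 2 / τ) ^ 2 * stdPDF x

lemma stdPDF_eq_mul_exp (x : ℝ) : stdPDF x = (√(2 * π))⁻¹ * exp (-(1 / 2) * x ^ 2) := by
  rw [stdPDF, div_eq_inv_mul]; ring_nf

lemma stdPDF_pos (x : ℝ) : 0 < stdPDF x := by
  unfold stdPDF; positivity

@[fun_prop]
lemma continuous_stdPDF : Continuous stdPDF := by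
  unfold stdPDF
  fun_prop

lemma integrable_stdPDF : Integrable stdPDF := by
  simp_rw [funext stdPDF_eq_mul_exp]
  exact (integrable_exp_neg_mul_sq (by norm_num)).const_mul _

lemma integrable_sq_mul_stdPDF : Integrable fun x => x ^ 2 * stdPDF x := by
  refine ((integrable_rpow_mul_exp_neg_mul_sq (b := 1 / 2) (s := 2) (by norm_num)
    (by norm_num)).const_mul (√(2 * π))⁻¹).congr (ae_of_all _ fun x => ?_)
  simp only [rpow_two, stdPDF_eq_mul_exp]
  ring

lemma integral_Ioi_zero_stdPDF : ∫ x in Ioi (0 : ℝ), stdPDF x = 1 / 2 := by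
  rw [integral_congr_ae (ae_of_all _ stdPDF_eq_mul_exp), integral_const_mul, integral_gaussian_Ioi,
    div_div_eq_mul_div, div_one, mul_comm π 2]
  field_simp

lemma integral_Ioi_zero_sq_mul_stdPDF : ∫ x in Ioi (0 : ℝ), x ^ 2 * stdPDF x = 1 / 2 := by
  have h := integral_rpow_mul_exp_neg_mul_rpow (p := 2) (q := 2) (b := 1 / 2) two_pos
    (by norm_num) (by norm_num)
  have hG : Gamma (3 / 2) = √π / 2 := by
    rw [show (3 / 2 : ℝ) = 1 / 2 + 1 by norm_num, Gamma_add_one (by norm_num), Gamma_one_half_eq]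
    ring
  have hb : (1 / 2 : ℝ) ^ (-(2 + 1) / 2 : ℝ) = 2 * √2 := by
    rw [show (-(2 + 1) / 2 : ℝ) = -1 - 1/2 by norm_num, rpow_sub (by norm_num), rpow_neg_one,
      ← sqrt_eq_rpow, one_div, sqrt_inv]
    field_simp
  simp_rw [rpow_two, show ((2 : ℝ) + 1) / 2 = 3 / 2 by norm_num, hG, hb] at h
  simp_rw [stdPDF_eq_mul_exp, mul_left_comm _ (√(2 * π))⁻¹, integral_const_mul, h,
    sqrt_mul zero_le_two]
  field_simp

lemma integral_Ioi_zero_eq_Ioc_add_Ioi {f : ℝ → ℝ} (hf : Integrable f) {c : ℝ} (hc : 0 ≤ c) :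
    ∫ x in Ioi 0, f x = (∫ x in Ioc 0 c, f x) + ∫ x in Ioi c, f x := by
  rw [← Ioc_union_Ioi_eq_Ioi hc, setIntegral_union Ioc_disjoint_Ioi_same measurableSet_Ioi
    hf.integrableOn hf.integrableOn]

lemma antitone_integral_Ioi_sq_mul_stdPDF : Antitone fun c => ∫ x in Ioi c, x ^ 2 * stdPDF x :=
  fun _ _ hcd => setIntegral_mono_set integrable_sq_mul_stdPDF.integrableOn
    (ae_of_all _ fun x => by positivity [stdPDF_pos x]) (Ioi_subset_Ioi hcd).eventuallyLE

lemma integral_Ioi_sq_mul_stdPDF_lt_half {c : ℝ} (hc : 0 < c) :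
    ∫ x in Ioi c, x ^ 2 * stdPDF x < 1 / 2 := by
  have hpos : 0 < ∫ x in Ioc 0 c, x ^ 2 * stdPDF x := by
    rw [← intervalIntegral.integral_of_le hc.le]
    exact intervalIntegral.intervalIntegral_pos_of_pos_on
      integrable_sq_mul_stdPDF.intervalIntegrable
      (fun x hx => mul_pos (pow_pos hx.1 2) (stdPDF_pos x)) hc
  linarith [integral_Ioi_zero_eq_Ioc_add_Ioi integrable_sq_mul_stdPDF hc.le,
    integral_Ioi_zero_sq_mul_stdPDF]

lemma integral_Ioi_sq_sub_sq_mul_stdPDF_nonneg {c : ℝ} (hc : 0 ≤ c) :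
    0 ≤ ∫ x in Ioi c, (x ^ 2 - c ^ 2) * stdPDF x :=
  setIntegral_nonneg measurableSet_Ioi fun x (hx : c < x) =>
    mul_nonneg (by nlinarith) (stdPDF_pos x).le

lemma half_sub_le_integral_Ioi_sq_sub_sq_mul_stdPDF {c : ℝ} (hc : 0 ≤ c) :
    1 / 2 - c ^ 2 / 2 ≤ ∫ x in Ioi c, (x ^ 2 - c ^ 2) * stdPDF x := by
  have hint : Integrable fun x => (x ^ 2 - c ^ 2) * stdPDF x := by
    simp_rw [sub_mul]
    exact integrable_sq_mul_stdPDF.sub (integrable_stdPDF.const_mul _)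
  have hzero : ∫ x in Ioi 0, (x ^ 2 - c ^ 2) * stdPDF x = 1 / 2 - c ^ 2 / 2 := by
    simp_rw [sub_mul]
    rw [integral_sub integrable_sq_mul_stdPDF.integrableOn
      (integrable_stdPDF.const_mul _).integrableOn, integral_const_mul,
      integral_Ioi_zero_sq_mul_stdPDF, integral_Ioi_zero_stdPDF]
    ring
  have hnonpos : ∫ x in Ioc 0 c, (x ^ 2 - c ^ 2) * stdPDF x ≤ 0 :=
    setIntegral_nonpos measurableSet_Ioc fun x hx =>
      mul_nonpos_of_nonpos_of_nonneg (by nlinarith [hx.1, hx.2]) (stdPDF_pos x).le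
  linarith [integral_Ioi_zero_eq_Ioc_add_Ioi hint hc]

noncomputable def tailLoss (τ x : ℝ) : ℝ :=
  τ / 2 * (Ioi (2 / τ)).indicator (fun x => (x - 2 / τ) ^ 2) x

lemma Fobj_eq (δ t τ : ℝ) :
    Fobj δ t τ = τ / 2 * (δ - 1 / 2) + t / (2 * τ) + ∫ x, tailLoss τ x * stdPDF x := by
  simp_rw [Fobj, tailLoss, mul_assoc, ← indicator_mul_left, integral_const_mul,
    integral_indicator measurableSet_Ioi]

lemma integrable_tailLoss_mul_stdPDF {τ : ℝ} (hτ : 0 < τ) :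
    Integrable fun x => tailLoss τ x * stdPDF x := by
  simp_rw [tailLoss, mul_assoc, ← indicator_mul_left]
  refine (IntegrableOn.integrable_indicator ?_ measurableSet_Ioi).const_mul _
  refine integrable_sq_mul_stdPDF.integrableOn.mono' (by fun_prop)
    ((ae_restrict_iff' measurableSet_Ioi).2 (ae_of_all _ fun x (hx : 2 / τ < x) => ?_))
  have : 0 < 2 / τ := by positivity
  rw [norm_of_nonneg (by positivity [stdPDF_pos x])]
  gcongr
  · exact (stdPDF_pos x).le
  · linarith

lemma indicator_le_tailLoss_sub {τ₁ τ₂ : ℝ} (h₁ : 0 < τ₁) (h₁₂ : τ₁ ≤ τ₂) (x : ℝ) :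
    (τ₂ - τ₁) / 2 * (Ioi (2 / τ₁)).indicator (fun x => x ^ 2 - (2 / τ₁) ^ 2) x
      ≤ tailLoss τ₂ x - tailLoss τ₁ x := by
  have h₂ : 0 < τ₂ := h₁.trans_le h₁₂
  have hc : 2 / τ₂ ≤ 2 / τ₁ := div_le_div_of_nonneg_left zero_le_two h₁ h₁₂
  by_cases hx : x ∈ Ioi (2 / τ₁)
  · have hx₂ : x ∈ Ioi (2 / τ₂) := hc.trans_lt hx
    rw [tailLoss, tailLoss, indicator_of_mem hx, indicator_of_mem hx, indicator_of_mem hx₂]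
    have key : τ₂ / 2 * (x - 2 / τ₂) ^ 2 - τ₁ / 2 * (x - 2 / τ₁) ^ 2
        - (τ₂ - τ₁) / 2 * (x ^ 2 - (2 / τ₁) ^ 2) = 2 * (τ₂ - τ₁) ^ 2 / (τ₁ ^ 2 * τ₂) := by
      field_simp
      ring
    have : 0 ≤ 2 * (τ₂ - τ₁) ^ 2 / (τ₁ ^ 2 * τ₂) := by positivity
    linarith
  · rw [tailLoss, tailLoss, indicator_of_notMem hx, indicator_of_notMem hx]
    simp only [mul_zero, sub_zero]
    exact mul_nonneg (by positivity) (indicator_nonneg (fun _ _ => sq_nonneg _) _)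

lemma tailLoss_sub_le_indicator {τ₁ τ₂ : ℝ} (h₁ : 0 < τ₁) (h₁₂ : τ₁ ≤ τ₂) (x : ℝ) :
    tailLoss τ₂ x - tailLoss τ₁ x
      ≤ (τ₂ - τ₁) / 2 * (Ioi (2 / τ₂)).indicator (fun x => x ^ 2) x := by
  have h₂ : 0 < τ₂ := h₁.trans_le h₁₂
  have hc : 2 / τ₂ ≤ 2 / τ₁ := div_le_div_of_nonneg_left zero_le_two h₁ h₁₂
  have hexp : ∀ τ, 0 < τ → τ / 2 * (x - 2 / τ) ^ 2 = τ * x ^ 2 / 2 - 2 * x + 2 / τ := by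
    intro τ hτ
    field_simp
    ring
  by_cases hx₂ : x ∈ Ioi (2 / τ₂)
  · rw [tailLoss, tailLoss, indicator_of_mem hx₂, indicator_of_mem hx₂, hexp τ₂ h₂]
    by_cases hx₁ : x ∈ Ioi (2 / τ₁)
    · rw [indicator_of_mem hx₁, hexp τ₁ h₁]
      linarith
    · rw [indicator_of_notMem hx₁]
      have hx₁' : τ₁ * x ≤ 2 := (le_div_iff₀' h₁).1 (not_lt.1 hx₁)
      have hx₂' : 2 / τ₂ < x := hx₂
      have hx : 0 < x := (div_pos two_pos h₂).trans hx₂'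
      nlinarith [mul_le_mul_of_nonneg_right hx₁' hx.le]
  · have hx₁ : x ∉ Ioi (2 / τ₁) := fun h => hx₂ (hc.trans_lt h)
    simp [tailLoss, indicator_of_notMem hx₁, indicator_of_notMem hx₂]

section Minimizer

variable {δ t τ₁ τ₂ : ℝ}

lemma Fobj_sub_eq (h₁ : 0 < τ₁) (h₂ : 0 < τ₂) :
    Fobj δ t τ₂ - Fobj δ t τ₁ = (τ₂ - τ₁) / 2 * (δ - 1 / 2 - t / (τ₁ * τ₂))
      + ∫ x, (tailLoss τ₂ x - tailLoss τ₁ x) * stdPDF x := by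
  simp_rw [Fobj_eq, sub_mul]
  rw [integral_sub (integrable_tailLoss_mul_stdPDF h₂) (integrable_tailLoss_mul_stdPDF h₁)]
  field_simp
  ring

lemma integrable_tailLoss_sub_mul_stdPDF (h₁ : 0 < τ₁) (h₂ : 0 < τ₂) :
    Integrable fun x => (tailLoss τ₂ x - tailLoss τ₁ x) * stdPDF x := by
  simp_rw [sub_mul]
  exact (integrable_tailLoss_mul_stdPDF h₂).sub (integrable_tailLoss_mul_stdPDF h₁)

lemma Fobj_sub_ge (h₁ : 0 < τ₁) (h₁₂ : τ₁ ≤ τ₂) :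
    (τ₂ - τ₁) / 2 * (δ - 1 / 2 - t / (τ₁ * τ₂)
        + ∫ x in Ioi (2 / τ₁), (x ^ 2 - (2 / τ₁) ^ 2) * stdPDF x)
      ≤ Fobj δ t τ₂ - Fobj δ t τ₁ := by
  have h₂ : 0 < τ₂ := h₁.trans_le h₁₂
  have hint : Integrable fun x => (x ^ 2 - (2 / τ₁) ^ 2) * stdPDF x := by
    simp_rw [sub_mul]
    exact integrable_sq_mul_stdPDF.sub (integrable_stdPDF.const_mul _)
  have hW : (τ₂ - τ₁) / 2 * ∫ x in Ioi (2 / τ₁), (x ^ 2 - (2 / τ₁) ^ 2) * stdPDF x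
      = ∫ x, (τ₂ - τ₁) / 2 * (Ioi (2 / τ₁)).indicator (fun x => x ^ 2 - (2 / τ₁) ^ 2) x
        * stdPDF x := by
    simp_rw [mul_assoc, ← indicator_mul_left, integral_const_mul,
      integral_indicator measurableSet_Ioi]
  rw [Fobj_sub_eq h₁ h₂, mul_add, hW]
  refine (add_le_add_iff_left _).2
    (integral_mono ?_ (integrable_tailLoss_sub_mul_stdPDF h₁ h₂) fun x => ?_)
  · simp_rw [mul_assoc, ← indicator_mul_left]
    exact (hint.indicator measurableSet_Ioi).const_mul _
  · exact mul_le_mul_of_nonneg_right (indicator_le_tailLoss_sub h₁ h₁₂ x) (stdPDF_pos x).le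

lemma Fobj_sub_le (h₁ : 0 < τ₁) (h₁₂ : τ₁ ≤ τ₂) :
    Fobj δ t τ₂ - Fobj δ t τ₁
      ≤ (τ₂ - τ₁) / 2 * (δ - 1 / 2 - t / (τ₁ * τ₂) + ∫ x in Ioi (2 / τ₂), x ^ 2 * stdPDF x) := by
  have h₂ : 0 < τ₂ := h₁.trans_le h₁₂
  have hV : (τ₂ - τ₁) / 2 * ∫ x in Ioi (2 / τ₂), x ^ 2 * stdPDF x
      = ∫ x, (τ₂ - τ₁) / 2 * (Ioi (2 / τ₂)).indicator (fun x => x ^ 2) x * stdPDF x := by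
    simp_rw [mul_assoc, ← indicator_mul_left, integral_const_mul,
      integral_indicator measurableSet_Ioi]
  rw [Fobj_sub_eq h₁ h₂, mul_add, hV]
  refine (add_le_add_iff_left _).2
    (integral_mono (integrable_tailLoss_sub_mul_stdPDF h₁ h₂) ?_ fun x => ?_)
  · simp_rw [mul_assoc, ← indicator_mul_left]
    exact (integrable_sq_mul_stdPDF.indicator measurableSet_Ioi).const_mul _
  · exact mul_le_mul_of_nonneg_right (tailLoss_sub_le_indicator h₁ h₁₂ x) (stdPDF_pos x).le

variable {τ : ℝ} (ht : 0 < t) (hmin : IsMinOn (Fobj δ t) (Ioi 0) τ)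
include ht hmin

lemma le_of_isMinOn_Fobj {σ : ℝ} (hσ : 0 < σ)
    (h : t / σ ^ 2 ≤ δ - 1 / 2 + ∫ x in Ioi (2 / σ), (x ^ 2 - (2 / σ) ^ 2) * stdPDF x) :
    τ ≤ σ := by
  by_contra! hστ
  have hslope : δ - 1 / 2 - t / (σ * τ)
      + ∫ x in Ioi (2 / σ), (x ^ 2 - (2 / σ) ^ 2) * stdPDF x ≤ 0 :=
    nonpos_of_mul_nonpos_right ((Fobj_sub_ge hσ hστ.le).trans (sub_nonpos.2 (hmin hσ)))
      (by linarith)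
  have : t / (σ * τ) < t / σ ^ 2 := by
    rw [sq]
    gcongr
  linarith

lemma ge_of_isMinOn_Fobj (hτ : 0 < τ) {σ : ℝ}
    (h : δ - 1 / 2 + ∫ x in Ioi (2 / σ), x ^ 2 * stdPDF x ≤ t / σ ^ 2) :
    σ ≤ τ := by
  by_contra! hτσ
  have hσ : 0 < σ := hτ.trans hτσ
  have hslope : 0 ≤ δ - 1 / 2 - t / (τ * σ) + ∫ x in Ioi (2 / σ), x ^ 2 * stdPDF x :=
    nonneg_of_mul_nonneg_right ((sub_nonneg.2 (hmin hσ)).trans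
      (Fobj_sub_le hτ hτσ.le)) (by linarith)
  have : t / σ ^ 2 < t / (τ * σ) := by
    rw [sq]
    gcongr
  linarith

end Minimizer

theorem tau_bounds (t δ τt : ℝ) (ht : 0 < t) (hδ : 1 / 2 < δ)
    (hmem : τt ∈ Set.Ioi (0 : ℝ)) (hmin : IsMinOn (Fobj δ t) (Set.Ioi (0 : ℝ)) τt) :
    Real.sqrt (t / (δ - 1 / 2 + ∫ x in Set.Ioi (2 * Real.sqrt ((δ - 1 / 2) / t)), x ^ 2 * stdPDF x))
      ≤ τt ∧
    τt ≤ min (Real.sqrt (t / (δ - 1 / 2))) (Real.sqrt ((4 + t) / δ)) ∧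
    (∫ x in Set.Ioi (2 * Real.sqrt ((δ - 1 / 2) / t)), x ^ 2 * stdPDF x) < 1 / 2 := by
  have hτ : 0 < τt := hmem
  have ha : 0 < δ - 1 / 2 := by linarith
  set v := ∫ x in Ioi (2 * √((δ - 1 / 2) / t)), x ^ 2 * stdPDF x
  have hv0 : 0 ≤ v := setIntegral_nonneg measurableSet_Ioi fun x _ => by positivity [stdPDF_pos x]
  refine ⟨?_, le_min ?_ ?_, integral_Ioi_sq_mul_stdPDF_lt_half (by positivity)⟩
  · refine ge_of_isMinOn_Fobj ht hmin hτ ?_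
    have hb : 2 * √((δ - 1 / 2) / t) ≤ 2 / √(t / (δ - 1 / 2 + v)) := by
      rw [div_eq_mul_inv (2 : ℝ), ← sqrt_inv, inv_div]
      gcongr
      linarith
    rw [sq_sqrt (by positivity), div_div_cancel₀ ht.ne']
    exact add_le_add_right (antitone_integral_Ioi_sq_mul_stdPDF hb) _
  · refine le_of_isMinOn_Fobj ht hmin (by positivity) ?_
    rw [sq_sqrt (by positivity), div_div_cancel₀ ht.ne']
    linarith [integral_Ioi_sq_sub_sq_mul_stdPDF_nonneg (c := 2 / √(t / (δ - 1 / 2)))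
      (by positivity)]
  · refine le_of_isMinOn_Fobj ht hmin (by positivity) ?_
    have hW := half_sub_le_integral_Ioi_sq_sub_sq_mul_stdPDF (c := 2 / √((4 + t) / δ))
      (by positivity)
    rw [div_pow, sq_sqrt (by positivity)] at hW ⊢
    have : t / ((4 + t) / δ) ≤ δ - 2 ^ 2 / ((4 + t) / δ) / 2 := by
      field_simp
      nlinarith
    linarith
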